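/- Fix $H>-1/2$, $\xi>0$, $\rho\in[-1,1]$, $T>0$, and bounded measurable $f,g:[0,T]\to\mathbb{C}$ with $\Re f=\Re g=0$. For $\epsilon>0$ let $\psi_\epsilon$ solve the reversionary Riccati ODE as above with $\Re\psi_\epsilon\le 0$. Then $\int_0^t \epsilon^{-H-1/2}\psi_\epsilon(u)du \to \int_0^t (g(s)+\frac{f^2(s)-f(s)}{2})ds$ as $\epsilon\to 0$, for every $t\le T$. -/

import Mathlib

/-!
Along a solution with `Re ψ ≤ 0`, the energy `‖ψ_ε‖²` satisfies
`d/dt ‖ψ_ε‖² ≤ -ε⁻¹ ‖ψ_ε‖² + ε K²` with `K = ε^(H-1/2) sup ‖g + (f² - f)/2‖`: the quadratic term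
contributes `ε^(H-1/2) (ξ²/2) ‖ψ‖² Re ψ ≤ 0`, and the `f`-term is purely imaginary because
`Re f = 0`. Grönwall then gives `‖ψ_ε‖ ≤ C ε^(H+1/2)`. Integrating the equation,
`ε^(-H-1/2) ∫₀ᵗ ψ_ε - ∫₀ᵗ (g + (f² - f)/2) = ∫₀ᵗ (ξ²/2 ψ_ε² + ρ ξ f ψ_ε) - ε^(1/2-H) ψ_ε(t)`,
which is `O(ε^(2H+1) + ε^(H+1/2) + ε)`, hence tends to `0` since `H > -1/2`.
-/

open MeasureTheory Set Filter Topology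

lemma gronwallBound_zero_neg_le {K B : ℝ} (hK : 0 < K) (hB : 0 ≤ B) (x : ℝ) :
    gronwallBound 0 (-K) B x ≤ B / K := by
  have h : gronwallBound 0 (-K) B x = B / K * (1 - Real.exp (-K * x)) := by
    rw [gronwallBound_of_K_ne_0 (neg_ne_zero.2 hK.ne')]
    ring
  rw [h]
  exact mul_le_of_le_one_right (by positivity) (sub_le_self _ (Real.exp_pos _).le)

lemma two_mul_inner_riccati_le {A ε K : ℝ} {z F c : ℂ} (hA : 0 ≤ A) (hε : 0 < ε) (hz : z.re ≤ 0)
    (hF : F.re = 0) (hc : ‖c‖ ≤ K) :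
    2 * inner ℝ z ((A : ℂ) * z ^ 2 + (F - ((ε⁻¹ : ℝ) : ℂ)) * z + c)
      ≤ -ε⁻¹ * ‖z‖ ^ 2 + ε * K ^ 2 := by
  have hexpand : inner ℝ z ((A : ℂ) * z ^ 2 + (F - ((ε⁻¹ : ℝ) : ℂ)) * z + c)
      = A * ‖z‖ ^ 2 * z.re - ε⁻¹ * ‖z‖ ^ 2 + inner ℝ z c := by
    rw [Complex.sq_norm, Complex.normSq_apply]
    simp only [Complex.inner, Complex.mul_re, Complex.add_re, Complex.conj_re, Complex.conj_im,
      Complex.mul_im, Complex.add_im, Complex.sub_re, Complex.sub_im, Complex.ofReal_re,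
      Complex.ofReal_im, pow_two, hF]
    ring
  have hcross : inner ℝ z c ≤ ‖z‖ * K :=
    (real_inner_le_norm z c).trans (mul_le_mul_of_nonneg_left hc (norm_nonneg z))
  have hamgm : 2 * (‖z‖ * K) ≤ ε⁻¹ * ‖z‖ ^ 2 + ε * K ^ 2 := by
    have hsq : ε⁻¹ * ‖z‖ ^ 2 + ε * K ^ 2 - 2 * (‖z‖ * K) = ε⁻¹ * (‖z‖ - ε * K) ^ 2 := by
      field_simp
      ring
    linarith [mul_nonneg (inv_nonneg.2 hε.le) (sq_nonneg (‖z‖ - ε * K))]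
  have hcubic : A * ‖z‖ ^ 2 * z.re ≤ 0 :=
    mul_nonpos_of_nonneg_of_nonpos (by positivity) hz
  rw [hexpand]
  linarith

lemma intervalIntegrable_of_norm_le {E : Type*} [NormedAddCommGroup E] {f : ℝ → E} {a b C : ℝ}
    (hf : AEStronglyMeasurable f) (hbound : ∀ s ∈ uIcc a b, ‖f s‖ ≤ C) :
    IntervalIntegrable f volume a b :=
  (Measure.integrableOn_of_bounded isCompact_uIcc.measure_lt_top.ne hf
    (ae_restrict_of_forall_mem measurableSet_uIcc hbound)).intervalIntegrable

section Riccati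

variable {ψ F c : ℝ → ℂ} {A ε K L T : ℝ}

lemma norm_le_of_hasDerivAt_riccati (hA : 0 ≤ A) (hε : 0 < ε) (hψ0 : ψ 0 = 0)
    (hψ : ∀ s ∈ Icc 0 T,
      HasDerivAt ψ ((A : ℂ) * ψ s ^ 2 + (F s - ((ε⁻¹ : ℝ) : ℂ)) * ψ s + c s) s)
    (hre : ∀ s ∈ Icc 0 T, (ψ s).re ≤ 0) (hF : ∀ s ∈ Icc 0 T, (F s).re = 0)
    (hc : ∀ s ∈ Icc 0 T, ‖c s‖ ≤ K) :
    ∀ s ∈ Icc 0 T, ‖ψ s‖ ≤ ε * K := by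
  intro s hs
  have hK : 0 ≤ K := (norm_nonneg _).trans (hc 0 ⟨le_rfl, hs.1.trans hs.2⟩)
  have hgronwall := le_gronwallBound_of_liminf_deriv_right_le (f := fun s => ‖ψ s‖ ^ 2) (δ := 0)
    (fun s hs => (hψ s hs).norm_sq.continuousAt.continuousWithinAt)
    (fun s hs _ hr =>
      (hψ s (Ico_subset_Icc_self hs)).norm_sq.hasDerivWithinAt.liminf_right_slope_le hr)
    (by simp [hψ0])
    (fun s hs => two_mul_inner_riccati_le hA hε (hre s (Ico_subset_Icc_self hs))
      (hF s (Ico_subset_Icc_self hs)) (hc s (Ico_subset_Icc_self hs))) s hs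
  have hsq : ‖ψ s‖ ^ 2 ≤ (ε * K) ^ 2 :=
    calc ‖ψ s‖ ^ 2 ≤ gronwallBound 0 (-ε⁻¹) (ε * K ^ 2) (s - 0) := hgronwall
      _ ≤ ε * K ^ 2 / ε⁻¹ := gronwallBound_zero_neg_le (inv_pos.2 hε) (by positivity) _
      _ = (ε * K) ^ 2 := by field_simp
  exact (pow_le_pow_iff_left₀ (norm_nonneg _) (by positivity) two_ne_zero).1 hsq

lemma norm_inv_mul_integral_sub_integral_le (hA : 0 ≤ A) (hε : 0 < ε) (hψ0 : ψ 0 = 0)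
    (hψ : ∀ s ∈ Icc 0 T,
      HasDerivAt ψ ((A : ℂ) * ψ s ^ 2 + (F s - ((ε⁻¹ : ℝ) : ℂ)) * ψ s + c s) s)
    (hre : ∀ s ∈ Icc 0 T, (ψ s).re ≤ 0) (hF : ∀ s ∈ Icc 0 T, (F s).re = 0)
    (hc : ∀ s ∈ Icc 0 T, ‖c s‖ ≤ K) (hFL : ∀ s ∈ Icc 0 T, ‖F s‖ ≤ L)
    (hFm : Measurable F) (hcm : Measurable c) {t : ℝ} (ht : t ∈ Icc 0 T) :
    ‖((ε⁻¹ : ℝ) : ℂ) * (∫ s in 0..t, ψ s) - ∫ s in 0..t, c s‖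
      ≤ (A * (ε * K) ^ 2 + L * (ε * K)) * t + ε * K := by
  have hψK := norm_le_of_hasDerivAt_riccati hA hε hψ0 hψ hre hF hc
  have hsub : uIcc 0 t ⊆ Icc 0 T := by
    rw [uIcc_of_le ht.1]
    exact Icc_subset_Icc_right ht.2
  have hψc : ContinuousOn ψ (uIcc 0 t) := fun s hs =>
    (hψ s (hsub hs)).continuousAt.continuousWithinAt
  set R : ℝ → ℂ := fun s => (A : ℂ) * ψ s ^ 2 + F s * ψ s
  have hRK : ∀ s ∈ Icc 0 T, ‖R s‖ ≤ A * (ε * K) ^ 2 + L * (ε * K) := by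
    intro s hs
    have hψs := hψK s hs
    calc ‖R s‖ ≤ A * ‖ψ s‖ ^ 2 + ‖F s‖ * ‖ψ s‖ := by
          refine (norm_add_le _ _).trans_eq ?_
          rw [norm_mul, norm_mul, norm_pow, Complex.norm_real, Real.norm_of_nonneg hA]
      _ ≤ A * (ε * K) ^ 2 + L * (ε * K) := by
          gcongr
          · exact (norm_nonneg _).trans (hFL s hs)
          · exact hFL s hs
  have hRi : IntervalIntegrable R volume 0 t :=
    ((hψc.pow 2).intervalIntegrable.const_mul _).add
      ((intervalIntegrable_of_norm_le hFm.aestronglyMeasurable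
        fun s hs => hFL s (hsub hs)).mul_continuousOn hψc)
  have hψi : IntervalIntegrable ψ volume 0 t := hψc.intervalIntegrable
  have hci := intervalIntegrable_of_norm_le hcm.aestronglyMeasurable fun s hs => hc s (hsub hs)
  have hftc : ∫ s in 0..t, (R s - ((ε⁻¹ : ℝ) : ℂ) * ψ s + c s) = ψ t := by
    rw [intervalIntegral.integral_eq_sub_of_hasDerivAt
      (fun s hs => (hψ s (hsub hs)).congr_deriv (by ring)) ((hRi.sub (hψi.const_mul _)).add hci),
      hψ0, sub_zero]
  have hidentity : ((ε⁻¹ : ℝ) : ℂ) * (∫ s in 0..t, ψ s) - ∫ s in 0..t, c s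
      = (∫ s in 0..t, R s) - ψ t := by
    rw [← hftc, intervalIntegral.integral_add (hRi.sub (hψi.const_mul _)) hci,
      intervalIntegral.integral_sub hRi (hψi.const_mul _), intervalIntegral.integral_const_mul]
    ring
  have hRint : ‖∫ s in 0..t, R s‖ ≤ (A * (ε * K) ^ 2 + L * (ε * K)) * t := by
    simpa [abs_of_nonneg ht.1] using intervalIntegral.norm_integral_le_of_norm_le_const
      fun s hs => hRK s (hsub (uIoc_subset_uIcc hs))
  rw [hidentity]
  exact (norm_sub_le _ _).trans (add_le_add hRint (hψK t ht))

end Riccati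

lemma norm_add_sq_sub_div_two_le {z w : ℂ} {M : ℝ} (hz : ‖z‖ ≤ M) (hw : ‖w‖ ≤ M) :
    ‖w + (z ^ 2 - z) / 2‖ ≤ M + (M ^ 2 + M) / 2 := by
  have hquad : ‖z ^ 2 - z‖ ≤ M ^ 2 + M :=
    calc ‖z ^ 2 - z‖ ≤ ‖z‖ ^ 2 + ‖z‖ := (norm_sub_le _ _).trans_eq (by rw [norm_pow])
      _ ≤ M ^ 2 + M := by gcongr
  calc ‖w + (z ^ 2 - z) / 2‖ ≤ ‖w‖ + ‖z ^ 2 - z‖ / 2 := by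
        rw [← Complex.norm_two, ← norm_div]
        exact norm_add_le _ _
    _ ≤ M + (M ^ 2 + M) / 2 := by gcongr

lemma norm_rpow_mul_integral_sub_integral_le {H ξ ρ ε M C T t : ℝ} {f G ψ : ℝ → ℂ}
    (hε : 0 < ε) (hfm : Measurable f) (hGm : Measurable G) (hf : ∀ s ∈ Icc 0 T, ‖f s‖ ≤ M)
    (hfre : ∀ s ∈ Icc 0 T, (f s).re = 0) (hG : ∀ s ∈ Icc 0 T, ‖G s‖ ≤ C) (hψ0 : ψ 0 = 0)
    (hψ : ∀ s ∈ Icc 0 T, HasDerivAt ψ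
      (((ε ^ (H - 1/2) : ℝ) : ℂ) * (ξ ^ 2 / 2 : ℝ) * ψ s ^ 2
        + (((ε ^ (H - 1/2) : ℝ) : ℂ) * ρ * ξ * f s - ((ε⁻¹ : ℝ) : ℂ)) * ψ s
        + ((ε ^ (H - 1/2) : ℝ) : ℂ) * G s) s)
    (hre : ∀ s ∈ Icc 0 T, (ψ s).re ≤ 0) (ht : t ∈ Icc 0 T) :
    ‖((ε ^ (-H - 1/2) : ℝ) : ℂ) * (∫ s in 0..t, ψ s) - ∫ s in 0..t, G s‖
      ≤ (ξ ^ 2 / 2 * (C * ε ^ (H + 1/2)) ^ 2 + |ρ * ξ| * M * (C * ε ^ (H + 1/2))) * t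
        + C * ε := by
  set u := ε ^ (H - 1/2)
  have hu : 0 < u := Real.rpow_pos_of_pos hε _
  have hriccati := norm_inv_mul_integral_sub_integral_le (ψ := ψ) (A := u * (ξ ^ 2 / 2))
    (F := fun s => ((u * (ρ * ξ) : ℝ) : ℂ) * f s) (c := fun s => (u : ℂ) * G s)
    (K := u * C) (L := u * (|ρ * ξ| * M)) (by positivity) hε hψ0
    (fun s hs => (hψ s hs).congr_deriv (by push_cast; ring)) hre
    (fun s hs => by simp [hfre s hs])
    (fun s hs => by
      rw [norm_mul, Complex.norm_real, Real.norm_of_nonneg hu.le]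
      exact mul_le_mul_of_nonneg_left (hG s hs) hu.le)
    (fun s hs => by
      rw [norm_mul, Complex.norm_real, Real.norm_eq_abs, abs_mul, abs_of_pos hu, mul_assoc]
      exact mul_le_mul_of_nonneg_left
        (mul_le_mul_of_nonneg_left (hf s hs) (abs_nonneg _)) hu.le)
    (by fun_prop) (by fun_prop) ht
  rw [intervalIntegral.integral_const_mul] at hriccati
  have hscale : ε ^ (-H - 1/2) = u⁻¹ * ε⁻¹ := by
    rw [show -H - 1/2 = -(H - 1/2) + -1 by ring, Real.rpow_add hε, Real.rpow_neg hε.le,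
      Real.rpow_neg_one]
  have hδ : ε * u = ε ^ (H + 1/2) := by
    rw [show H + 1/2 = 1 + (H - 1/2) by ring, Real.rpow_add hε, Real.rpow_one]
  calc ‖((ε ^ (-H - 1/2) : ℝ) : ℂ) * (∫ s in 0..t, ψ s) - ∫ s in 0..t, G s‖
      = u⁻¹ * ‖((ε⁻¹ : ℝ) : ℂ) * (∫ s in 0..t, ψ s) - (u : ℂ) * ∫ s in 0..t, G s‖ := by
        rw [← Real.norm_of_nonneg (inv_nonneg.2 hu.le), ← Complex.norm_real, ← norm_mul, hscale]
        have hu' : (u : ℂ) ≠ 0 := Complex.ofReal_ne_zero.2 hu.ne'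
        congr 1
        push_cast
        field_simp
    _ ≤ u⁻¹ * ((u * (ξ ^ 2 / 2) * (ε * (u * C)) ^ 2 + u * (|ρ * ξ| * M) * (ε * (u * C))) * t
          + ε * (u * C)) := by gcongr
    _ = _ := by
        rw [← hδ]
        field_simp

theorem stmt5 (H ξ ρ T : ℝ) (hH : -(1:ℝ)/2 < H)
    (f g : ℝ → ℂ) (hfm : Measurable f) (hgm : Measurable g)
    (M : ℝ) (hbdd : ∀ t ∈ Icc (0:ℝ) T, ‖f t‖ ≤ M ∧ ‖g t‖ ≤ M)
    (hfre : ∀ t ∈ Icc (0:ℝ) T, (f t).re = 0)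
    (ψ : ℝ → ℝ → ℂ)
    (hψ0 : ∀ ε : ℝ, 0 < ε → ψ ε 0 = 0)
    (hode : ∀ ε : ℝ, 0 < ε → ∀ t ∈ Icc (0:ℝ) T, HasDerivAt (ψ ε)
      (((ε ^ (H - 1/2) : ℝ) : ℂ) * (ξ^2/2 : ℝ) * ψ ε t ^ 2
        + (((ε ^ (H - 1/2) : ℝ) : ℂ) * (ρ : ℂ) * (ξ : ℂ) * f t - ((ε⁻¹ : ℝ) : ℂ)) * ψ ε t
        + ((ε ^ (H - 1/2) : ℝ) : ℂ) * (g t + (f t ^ 2 - f t) / 2)) t)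
    (hneg : ∀ ε : ℝ, 0 < ε → ∀ t ∈ Icc (0:ℝ) T, (ψ ε t).re ≤ 0) :
    ∀ t ∈ Icc (0:ℝ) T,
      Tendsto (fun ε : ℝ => ∫ u in (0:ℝ)..t, ((ε ^ (-H - 1/2) : ℝ) : ℂ) * ψ ε u)
        (nhdsWithin 0 (Set.Ioi 0))
        (nhds (∫ s in (0:ℝ)..t, (g s + (f s ^ 2 - f s) / 2))) := by
  intro t ht
  set C := M + (M ^ 2 + M) / 2
  have hbound (ε : ℝ) (hε : 0 < ε) := norm_rpow_mul_integral_sub_integral_le hε hfm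
    (by fun_prop) (fun s hs => (hbdd s hs).1) hfre
    (fun s hs => norm_add_sq_sub_div_two_le (hbdd s hs).1 (hbdd s hs).2)
    (hψ0 ε hε) (hode ε hε) (hneg ε hε) ht
  have hlim : Tendsto (fun ε : ℝ => (ξ ^ 2 / 2 * (C * ε ^ (H + 1/2)) ^ 2
      + |ρ * ξ| * M * (C * ε ^ (H + 1/2))) * t + C * ε) (𝓝[>] 0) (𝓝 0) := by
    have hpow : Tendsto (fun ε : ℝ => ε ^ (H + 1/2)) (𝓝[>] 0) (𝓝 0) := by
      have h := (Real.continuousAt_rpow_const 0 (H + 1/2) (Or.inr (by linarith))).tendsto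
      rw [Real.zero_rpow (by linarith)] at h
      exact h.mono_left nhdsWithin_le_nhds
    have hid : Tendsto (fun ε : ℝ => ε) (𝓝[>] 0) (𝓝 0) := nhdsWithin_le_nhds
    simpa using ((((hpow.const_mul C).pow 2).const_mul _).add
      ((hpow.const_mul C).const_mul _)).mul_const t |>.add (hid.const_mul C)
  rw [← tendsto_sub_nhds_zero_iff]
  refine squeeze_zero_norm' ?_ hlim
  filter_upwards [self_mem_nhdsWithin] with ε (hε : 0 < ε)
  rw [intervalIntegral.integral_const_mul]
  exact hbound ε hε
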